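/- With A = Z/2[y_4,y_6], B = Z/2[x_2,x_4], and the A-module structure on B given by y_4 ↦ x_2^2 + x_4, y_6 ↦ x_2 x_4, let π_! : B → A be the A-module map determined by π_!(1) = 0, π_!(x_2) = 0, π_!(x_2^2) = 1 on the free basis {1, x_2, x_2^2}. Then for every n ≥ 1, π_!(x_2^(2n)) ≡ y_4^(n-1) (mod y_6), π_!(x_2^(2n+1)) ≡ 0 (mod y_6), and π_!(x_4^n) ≡ y_4^(n-1) (mod y_6). -/
import Mathlib


open MvPolynomial

noncomputable section

abbrev A16 := MvPolynomial (Fin 2) (ZMod 2)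
abbrev B16 := MvPolynomial (Fin 2) (ZMod 2)

def y₄ : A16 := X 0
def y₆ : A16 := X 1
def x₂ : B16 := X 0
def x₄ : B16 := X 1

/-- The ring map `π* : A → B` with `π*(y₄) = x₂² + x₄`, `π*(y₆) = x₂ x₄`. -/
def πs : A16 →+* B16 := (aeval ![x₂ ^ 2 + x₄, x₂ * x₄] : A16 →ₐ[ZMod 2] B16).toRingHom

/-- The quotient map `A → A/(y₆)`. -/
def q : A16 →+* A16 ⧸ Ideal.span {y₆} := Ideal.Quotient.mk (Ideal.span {y₆})

lemma hpy4 : πs y₄ = x₂ ^ 2 + x₄ := by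
  simp [πs, y₄]

lemma hpy6 : πs y₆ = x₂ * x₄ := by
  simp [πs, y₆]

lemma htwoB : (2 : B16) = 0 := by
  have h := CharP.cast_eq_zero B16 2
  simpa using h

lemma hqy6 : q y₆ = 0 :=
  Ideal.Quotient.eq_zero_iff_mem.mpr (Ideal.subset_span (Set.mem_singleton _))

/-- key identity: `x₂^(k+3) = πs y₄ * x₂^(k+1) + πs y₆ * x₂^k` -/
lemma keyx2 (k : ℕ) : x₂ ^ (k + 3) = πs y₄ * x₂ ^ (k + 1) + πs y₆ * x₂ ^ k := by
  rw [hpy4, hpy6]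
  linear_combination (-(x₄ * x₂ ^ (k + 1))) * htwoB

lemma keyx4base : x₄ = πs y₄ * 1 + x₂ ^ 2 := by
  rw [hpy4]
  linear_combination (-(x₂ ^ 2)) * htwoB

lemma keyx4 (m : ℕ) : x₄ ^ (m + 2) = πs y₄ * x₄ ^ (m + 1) + πs y₆ * (x₂ * x₄ ^ m) := by
  rw [hpy4, hpy6]
  linear_combination (-(x₂ ^ 2 * x₄ ^ (m + 1))) * htwoB

/-- Integration along the fiber: the `A`-linear map `π_! : B → A` with `π_!(1) = π_!(x₂) = 0`
and `π_!(x₂²) = 1` satisfies, mod `y₆`: `π_!(x₂^{2n}) = y₄^{n-1}`, `π_!(x₂^{2n+1}) = 0`,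
and `π_!(x₄^n) = y₄^{n-1}` for `n ≥ 1`. -/
theorem stmt_16 (π : B16 →+ A16)
    (hlin : ∀ (a : A16) (b : B16), π (πs a * b) = a * π b)
    (h1 : π 1 = 0) (hx2 : π x₂ = 0) (hx22 : π (x₂ ^ 2) = 1)
    (n : ℕ) (hn : 1 ≤ n) :
    q (π (x₂ ^ (2 * n))) = q (y₄ ^ (n - 1)) ∧
    q (π (x₂ ^ (2 * n + 1))) = 0 ∧
    q (π (x₄ ^ n)) = q (y₄ ^ (n - 1)) := by
  -- odd powers of x₂
  have hodd : ∀ m : ℕ, q (π (x₂ ^ (2 * m + 1))) = 0 := by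
    intro m
    induction m with
    | zero => rw [show (2*0+1 : ℕ) = 1 from rfl, pow_one, hx2, map_zero]
    | succ m ih =>
      have : 2 * (m + 1) + 1 = (2 * m) + 3 := by ring
      rw [this, keyx2 (2 * m), map_add, hlin, hlin, map_add, map_mul, map_mul, hqy6]
      rw [show (2 * m + 1 : ℕ) = 2 * m + 1 from rfl] at ih
      rw [ih]
      ring
  -- even powers of x₂
  have heven : ∀ m : ℕ, q (π (x₂ ^ (2 * m + 2))) = q y₄ ^ m := by
    intro m
    induction m with
    | zero => rw [show (2*0+2 : ℕ) = 2 from rfl, hx22, map_one, pow_zero]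
    | succ m ih =>
      have h3 : 2 * (m + 1) + 2 = (2 * m + 1) + 3 := by ring
      rw [h3, keyx2 (2 * m + 1), map_add, hlin, hlin, map_add, map_mul, map_mul, hqy6]
      rw [show (2 * m + 1 + 1 : ℕ) = 2 * m + 2 from rfl, ih]
      ring
  -- powers of x₄
  have hx4 : ∀ m : ℕ, q (π (x₄ ^ (m + 1))) = q y₄ ^ m := by
    intro m
    induction m with
    | zero =>
      have : π x₄ = 1 := by
        rw [keyx4base, map_add, hlin, h1, hx22, mul_zero, zero_add]
      rw [show (0+1 : ℕ) = 1 from rfl, pow_one, this, map_one, pow_zero]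
    | succ m ih =>
      rw [keyx4 m, map_add, hlin, hlin, map_add, map_mul, map_mul, hqy6, ih]
      ring
  obtain ⟨k, rfl⟩ : ∃ k, n = k + 1 := ⟨n - 1, (Nat.succ_pred_eq_of_pos hn).symm⟩
  refine ⟨?_, hodd (k + 1), ?_⟩
  · have h2 : 2 * (k + 1) = 2 * k + 2 := by ring
    rw [h2, heven k, Nat.add_sub_cancel, q.map_pow]
  · rw [hx4 k, Nat.add_sub_cancel, q.map_pow]

end
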